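/- Let N ≤ L, d ≤ N, and c > 0, and let N_G be a positive integer. For P > 1 set N_f = (N_G/2)·log₂ P and Δ = 2/(c·2^{N_f})^{1/N_G}. Let H ∈ ℂ^{N×L} be written H^H = F·C with F ∈ ℂ^{L×N} truncated unitary and C invertible; let F̂, Ũ, V be truncated unitary with Ũ^H F̂^H V = 0, G = C^{-1} F^H F̂ Ũ, Q_I = G^H H V V^H H^H G, and suppose the quantization error satisfies d_c²(F̂,F) ≤ Δ². Then for every Hermitian positive semidefinite Q_S ∈ ℂ^{d×d}, the rate loss satisfies R_p − R_q ≤ d·log(1 + 8/(c^{2/N_G}·d)), a bound independent of P, where R_p = log det(I_d + (P/d)Q_S) and R_q = log det(I_d + (P/d)(Q_S+Q_I)) − log det(I_d + (P/d)Q_I). -/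

import Mathlib

open Matrix
open scoped ComplexOrder

/-- Squared Frobenius norm of a complex matrix. -/
noncomputable def frobNormSq {m n : Type*} [Fintype m] [Fintype n]
    (A : Matrix m n ℂ) : ℝ :=
  ∑ i, ∑ j, ‖A i j‖ ^ 2

/-- Squared chordal distance: `d_c(X,Y)² = (1/2) ‖X Xᴴ − Y Yᴴ‖_F²`. -/
noncomputable def chordalDistSq {L N : ℕ} (X Y : Matrix (Fin L) (Fin N) ℂ) : ℝ :=
  (1 / 2) * frobNormSq (X * Xᴴ - Y * Yᴴ)

/-!
Adding a positive semidefinite matrix to a positive definite one does not decrease the determinant,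
so `det (I + (P/d)(Q_S + Q_I)) ≥ det (I + (P/d) Q_S)` and the rate loss is at most
`log det (I + (P/d) Q_I) ≤ d log (1 + (P/d) tr Q_I)`.
Since the aligned precoder satisfies `Vᴴ F̂ U = 0`, the residual interference is
`Vᴴ Hᴴ G = Vᴴ (F Fᴴ - F̂ F̂ᴴ) F̂ U`, whose squared Frobenius norm `tr Q_I` is at most
`‖F Fᴴ - F̂ F̂ᴴ‖_F² = 2 d_c(F̂, F)² ≤ 2 Δ²`. Scaling the feedback as `N_f = (N_G/2) log₂ P` makes
`Δ² = 4 / (c^{2/N_G} P)`, so `(P/d) tr Q_I ≤ 8 / (c^{2/N_G} d)` no matter how large `P` is.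
-/

namespace Matrix

variable {𝕜 n : Type*} [RCLike 𝕜] [Fintype n] [DecidableEq n]

theorem IsHermitian.det_one_add {A : Matrix n n 𝕜} (hA : A.IsHermitian) :
    (1 + A).det = ∏ i, (1 + (hA.eigenvalues i : 𝕜)) := by
  have h : 1 + A = cfc (fun x : ℝ ↦ 1 + x) A := by
    rw [cfc_add .., cfc_const_one .., cfc_id' ..]
  rw [h, hA.cfc_eq]
  simp [IsHermitian.cfc, -Unitary.conjStarAlgAut_apply]

theorem PosSemidef.norm_det_one_add {A : Matrix n n 𝕜} (hA : A.PosSemidef) :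
    ‖(1 + A).det‖ = ∏ i, (1 + hA.1.eigenvalues i) := by
  rw [hA.1.det_one_add, norm_prod]
  refine Finset.prod_congr rfl fun i _ ↦ ?_
  rw [← RCLike.ofReal_one, ← RCLike.ofReal_add, RCLike.norm_ofReal,
    abs_of_nonneg (by linarith [hA.eigenvalues_nonneg i])]

theorem PosSemidef.one_le_norm_det_one_add {A : Matrix n n 𝕜} (hA : A.PosSemidef) :
    1 ≤ ‖(1 + A).det‖ := by
  rw [hA.norm_det_one_add]
  exact Finset.one_le_prod fun i _ ↦ le_add_of_nonneg_right (hA.eigenvalues_nonneg i)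

theorem PosSemidef.norm_det_one_add_le {A : Matrix n n 𝕜} (hA : A.PosSemidef) :
    ‖(1 + A).det‖ ≤ (1 + RCLike.re A.trace) ^ Fintype.card n := by
  have htrace : RCLike.re A.trace = ∑ i, hA.1.eigenvalues i := by
    simp [hA.1.trace_eq_sum_eigenvalues]
  rw [hA.norm_det_one_add, htrace, ← Finset.card_univ, ← Finset.prod_const]
  refine Finset.prod_le_prod (fun i _ ↦ ?_) fun i _ ↦ ?_
  · linarith [hA.eigenvalues_nonneg i]
  · linarith [Finset.single_le_sum (fun j _ ↦ hA.eigenvalues_nonneg j) (Finset.mem_univ i)]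

-- With `T = Bᴴ B`, Sylvester's identity gives `det (W + T) = det W * det (1 + B W⁻¹ Bᴴ)`.
open scoped MatrixOrder in
theorem PosDef.norm_det_le_norm_det_add {W T : Matrix n n 𝕜} (hW : W.PosDef)
    (hT : T.PosSemidef) : ‖W.det‖ ≤ ‖(W + T).det‖ := by
  obtain ⟨B, rfl⟩ := CStarAlgebra.nonneg_iff_eq_star_mul_self.mp hT.nonneg
  have hfactor : W + star B * B = W * (1 + W⁻¹ * Bᴴ * B) := by
    rw [Matrix.mul_add, Matrix.mul_one, ← Matrix.mul_assoc, ← Matrix.mul_assoc,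
      mul_nonsing_inv W ((isUnit_iff_isUnit_det W).mp hW.isUnit), Matrix.one_mul,
      star_eq_conjTranspose]
  have hsandwich : (B * (W⁻¹ * Bᴴ)).PosSemidef :=
    Matrix.mul_assoc B W⁻¹ Bᴴ ▸ hW.inv.posSemidef.mul_mul_conjTranspose_same B
  rw [hfactor, det_mul, norm_mul, det_one_add_mul_comm]
  exact le_mul_of_one_le_right (norm_nonneg _) hsandwich.one_le_norm_det_one_add

theorem PosSemidef.log_norm_det_one_add_le {S T : Matrix n n 𝕜} (hS : S.PosSemidef)
    (hT : T.PosSemidef) : Real.log ‖(1 + S).det‖ ≤ Real.log ‖(1 + (S + T)).det‖ := by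
  have hW : (1 + S).PosDef := PosDef.one.add_posSemidef hS
  rw [← add_assoc]
  exact Real.log_le_log (by simpa using hW.det_pos.ne') (hW.norm_det_le_norm_det_add hT)

end Matrix

section Frobenius

variable {k l m n : Type*} [Fintype k] [Fintype l] [Fintype m] [Fintype n]

theorem frobNormSq_nonneg (A : Matrix m n ℂ) : 0 ≤ frobNormSq A :=
  Finset.sum_nonneg fun _ _ ↦ Finset.sum_nonneg fun _ _ ↦ sq_nonneg _

theorem frobNormSq_conjTranspose (A : Matrix m n ℂ) : frobNormSq Aᴴ = frobNormSq A := by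
  rw [frobNormSq, Finset.sum_comm]
  simp [frobNormSq]

theorem frobNormSq_sub_comm (A B : Matrix m n ℂ) : frobNormSq (A - B) = frobNormSq (B - A) := by
  simp only [frobNormSq, Matrix.sub_apply, norm_sub_rev]

theorem trace_conjTranspose_mul_self_eq_frobNormSq (A : Matrix m n ℂ) :
    (Aᴴ * A).trace = frobNormSq A := by
  simp only [trace, diag, mul_apply, conjTranspose_apply, frobNormSq]
  push_cast
  rw [Finset.sum_comm]
  refine Finset.sum_congr rfl fun i _ ↦ Finset.sum_congr rfl fun j _ ↦ ?_
  rw [← Complex.conj_mul']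
  rfl

theorem frobNormSq_mul_eq_trace (B : Matrix m n ℂ) (Y : Matrix n l ℂ) :
    (frobNormSq (B * Y) : ℂ) = (Bᴴ * B * (Y * Yᴴ)).trace := by
  rw [← trace_conjTranspose_mul_self_eq_frobNormSq, conjTranspose_mul, trace_mul_cycle,
    trace_mul_cycle, ← Matrix.mul_assoc Bᴴ B Y, Matrix.mul_assoc (Bᴴ * B) Y Yᴴ]

theorem frobNormSq_mul_le_of_conjTranspose_mul_self_eq_one [DecidableEq l] [DecidableEq n]
    (B : Matrix m n ℂ) {X : Matrix n l ℂ} (hX : Xᴴ * X = 1) :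
    frobNormSq (B * X) ≤ frobNormSq B := by
  -- `S` projects onto the orthogonal complement of the range of `X`.
  set S : Matrix n n ℂ := 1 - X * Xᴴ
  have hS : S * Sᴴ = S := by
    simp [S, sub_mul, mul_sub, conjTranspose_sub, Matrix.mul_assoc, ← Matrix.mul_assoc Xᴴ X, hX]
  have hsplit : frobNormSq (B * X) + frobNormSq (B * S) = frobNormSq B := by
    have h : ((frobNormSq (B * X) + frobNormSq (B * S) : ℝ) : ℂ) = frobNormSq B := by
      rw [Complex.ofReal_add, frobNormSq_mul_eq_trace, frobNormSq_mul_eq_trace, hS,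
        ← trace_add, ← Matrix.mul_add, add_sub_cancel, Matrix.mul_one,
        trace_conjTranspose_mul_self_eq_frobNormSq]
    exact_mod_cast h
  linarith [frobNormSq_nonneg (B * S)]

theorem frobNormSq_conjTranspose_mul_mul_le [DecidableEq k] [DecidableEq l] [DecidableEq m]
    [DecidableEq n] {V : Matrix m k ℂ} (hV : Vᴴ * V = 1) (B : Matrix m n ℂ) {X : Matrix n l ℂ}
    (hX : Xᴴ * X = 1) : frobNormSq (Vᴴ * B * X) ≤ frobNormSq B :=
  calc frobNormSq (Vᴴ * B * X) ≤ frobNormSq (Vᴴ * B) :=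
        frobNormSq_mul_le_of_conjTranspose_mul_self_eq_one _ hX
    _ = frobNormSq (Bᴴ * V) := by rw [← frobNormSq_conjTranspose, conjTranspose_mul,
        conjTranspose_conjTranspose]
    _ ≤ frobNormSq Bᴴ := frobNormSq_mul_le_of_conjTranspose_mul_self_eq_one _ hV
    _ = frobNormSq B := frobNormSq_conjTranspose B

theorem log_norm_det_one_add_smul_conjTranspose_mul_self_le [DecidableEq n] (B : Matrix m n ℂ)
    {r : ℝ} (hr : 0 ≤ r) :
    Real.log ‖(1 + (r : ℂ) • (Bᴴ * B)).det‖
      ≤ Fintype.card n * Real.log (1 + r * frobNormSq B) := by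
  have hpsd := (posSemidef_conjTranspose_mul_self B).smul (Complex.zero_le_real.mpr hr)
  have htrace : RCLike.re ((r : ℂ) • (Bᴴ * B)).trace = r * frobNormSq B := by
    rw [trace_smul, trace_conjTranspose_mul_self_eq_frobNormSq, smul_eq_mul, ← Complex.ofReal_mul]
    rfl
  rw [← Real.log_pow, ← htrace]
  exact Real.log_le_log (one_pos.trans_le hpsd.one_le_norm_det_one_add) hpsd.norm_det_one_add_le

end Frobenius

theorem interference_leakage_eq {k l m n : Type*} [Fintype l] [Fintype n] [DecidableEq n]
    {H : Matrix n l ℂ} {F Fhat : Matrix l n ℂ} {C : Matrix n n ℂ} {U : Matrix n k ℂ}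
    {V : Matrix l m ℂ} (hFC : Hᴴ = F * C) (hC : IsUnit C.det) (hFhat : Fhatᴴ * Fhat = 1)
    (hIA : Uᴴ * Fhatᴴ * V = 0) :
    Vᴴ * Hᴴ * (C⁻¹ * Fᴴ * Fhat * U) = Vᴴ * (F * Fᴴ - Fhat * Fhatᴴ) * (Fhat * U) := by
  have hVFU : Vᴴ * (Fhat * U) = 0 := by
    simpa [Matrix.mul_assoc] using congrArg conjTranspose hIA
  have hHG : Hᴴ * (C⁻¹ * Fᴴ * Fhat * U) = F * Fᴴ * (Fhat * U) := by
    simp only [hFC, Matrix.mul_assoc, mul_nonsing_inv_cancel_left C _ hC]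
  have hproj : (F * Fᴴ - Fhat * Fhatᴴ) * (Fhat * U) = F * Fᴴ * (Fhat * U) - Fhat * U := by
    rw [Matrix.sub_mul, Matrix.mul_assoc Fhat, ← Matrix.mul_assoc Fhatᴴ, hFhat, Matrix.one_mul]
  rw [Matrix.mul_assoc Vᴴ (F * Fᴴ - _), hproj, Matrix.mul_sub, hVFU, sub_zero, Matrix.mul_assoc,
    hHG]

theorem packing_radius_sq {c P x : ℝ} (hc : 0 < c) (hx : x ≠ 0) (hP : 0 < P) :
    (2 / (c * 2 ^ (x / 2 * Real.logb 2 P)) ^ (1 / x)) ^ 2 = 4 / (c ^ (2 / x) * P) := by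
  have h2 : (0 : ℝ) ≤ 2 ^ (x / 2 * Real.logb 2 P) := by positivity
  have hpow : ((c * 2 ^ (x / 2 * Real.logb 2 P)) ^ (1 / x)) ^ 2 = c ^ (2 / x) * P := by
    rw [← Real.rpow_natCast, ← Real.rpow_mul (by positivity), Real.mul_rpow hc.le h2,
      ← Real.rpow_mul zero_le_two]
    congr 1
    · congr 1
      ring
    · rw [show x / 2 * Real.logb 2 P * (1 / x * (2 : ℕ)) = Real.logb 2 P by field_simp; ring]
      exact Real.rpow_logb zero_lt_two (by norm_num) hP
  rw [div_pow, hpow]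
  norm_num

theorem rate_loss_bounded_constant_with_scaled_feedback_general
    (N L d m : ℕ)
    (N_G : ℕ) (hNG : 0 < N_G) (c : ℝ) (hc : 0 < c)
    (P : ℝ) (hP : 1 < P)
    (N_f : ℝ) (hNf : N_f = (N_G / 2 : ℝ) * Real.logb 2 P)
    (Δ : ℝ) (hΔ : Δ = 2 / (c * (2 : ℝ) ^ N_f) ^ (1 / (N_G : ℝ)))
    (H : Matrix (Fin N) (Fin L) ℂ)
    (F : Matrix (Fin L) (Fin N) ℂ) (C : Matrix (Fin N) (Fin N) ℂ)
    (hFC : Hᴴ = F * C) (hC : IsUnit C.det)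
    (Fhat : Matrix (Fin L) (Fin N) ℂ) (hFhat : Fhatᴴ * Fhat = 1)
    (U : Matrix (Fin N) (Fin d) ℂ) (hU : Uᴴ * U = 1)
    (V : Matrix (Fin L) (Fin m) ℂ) (hV : Vᴴ * V = 1)
    (hIA : Uᴴ * Fhatᴴ * V = 0)
    (G : Matrix (Fin N) (Fin d) ℂ) (hG : G = C⁻¹ * Fᴴ * Fhat * U)
    (QI : Matrix (Fin d) (Fin d) ℂ) (hQI : QI = Gᴴ * H * V * Vᴴ * Hᴴ * G)
    (hq : chordalDistSq Fhat F ≤ Δ ^ 2)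
    (QS : Matrix (Fin d) (Fin d) ℂ) (hQS : QS.PosSemidef) :
    Real.log ‖(1 + ((P / d : ℝ) : ℂ) • QS).det‖
        - (Real.log ‖(1 + ((P / d : ℝ) : ℂ) • (QS + QI)).det‖
            - Real.log ‖(1 + ((P / d : ℝ) : ℂ) • QI).det‖)
      ≤ d * Real.log (1 + 8 / (c ^ (2 / (N_G : ℝ)) * d)) := by
  have hgain : P / d * (2 * Δ ^ 2) = 8 / (c ^ (2 / (N_G : ℝ)) * d) := by
    rw [hΔ, hNf, packing_radius_sq hc (by positivity) (by linarith)]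
    field_simp
    ring
  set a : ℝ := P / d
  have ha : 0 ≤ a := by positivity
  set A := Vᴴ * Hᴴ * G
  have hQIA : QI = Aᴴ * A := by
    simp only [hQI, A, conjTranspose_mul, conjTranspose_conjTranspose, Matrix.mul_assoc]
  have hFU : (Fhat * U)ᴴ * (Fhat * U) = 1 := by
    rw [conjTranspose_mul, Matrix.mul_assoc, ← Matrix.mul_assoc Fhatᴴ, hFhat, Matrix.one_mul, hU]
  have hleak : frobNormSq A ≤ 2 * Δ ^ 2 :=
    calc frobNormSq A = frobNormSq (Vᴴ * (F * Fᴴ - Fhat * Fhatᴴ) * (Fhat * U)) := by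
          simp only [A, hG, interference_leakage_eq hFC hC hFhat hIA]
      _ ≤ frobNormSq (F * Fᴴ - Fhat * Fhatᴴ) := frobNormSq_conjTranspose_mul_mul_le hV _ hFU
      _ = 2 * chordalDistSq Fhat F := by rw [chordalDistSq, frobNormSq_sub_comm]; ring
      _ ≤ 2 * Δ ^ 2 := by linarith
  have hmono := (hQS.smul (Complex.zero_le_real.mpr ha)).log_norm_det_one_add_le
    ((posSemidef_conjTranspose_mul_self A).smul (Complex.zero_le_real.mpr ha))
  calc _ ≤ Real.log ‖(1 + (a : ℂ) • QI).det‖ := by rw [smul_add, hQIA]; linarith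
    _ ≤ d * Real.log (1 + a * frobNormSq A) := by
      simpa [hQIA] using log_norm_det_one_add_smul_conjTranspose_mul_self_le A ha
    _ ≤ d * Real.log (1 + 8 / (c ^ (2 / (N_G : ℝ)) * d)) := by
      gcongr
      · nlinarith [frobNormSq_nonneg A]
      · rw [← hgain]; gcongr

/-- **Theorem 2 (quantitative core).**  With feedback bits scaled as
`N_f = (N_G/2) log₂ P`, packing radius `Δ = 2/(c 2^{N_f})^{1/N_G}`, and a
quantization error `d_c(F̂,F)² ≤ Δ²`, the rate loss `R_p − R_q` is bounded by
the constant `d log(1 + 8/(c^{2/N_G} d))`, independent of `P`. -/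
theorem rate_loss_bounded_constant_with_scaled_feedback
    (N L d m : ℕ) (hNL : N ≤ L) (hdN : d ≤ N) (hd : 0 < d)
    (N_G : ℕ) (hNG : 0 < N_G) (c : ℝ) (hc : 0 < c)
    (P : ℝ) (hP : 1 < P)
    (N_f : ℝ) (hNf : N_f = (N_G / 2 : ℝ) * Real.logb 2 P)
    (Δ : ℝ) (hΔ : Δ = 2 / (c * (2 : ℝ) ^ N_f) ^ (1 / (N_G : ℝ)))
    (H : Matrix (Fin N) (Fin L) ℂ)
    (F : Matrix (Fin L) (Fin N) ℂ) (C : Matrix (Fin N) (Fin N) ℂ)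
    (hFC : Hᴴ = F * C) (hF : Fᴴ * F = 1) (hC : IsUnit C.det)
    (Fhat : Matrix (Fin L) (Fin N) ℂ) (hFhat : Fhatᴴ * Fhat = 1)
    (U : Matrix (Fin N) (Fin d) ℂ) (hU : Uᴴ * U = 1)
    (V : Matrix (Fin L) (Fin m) ℂ) (hV : Vᴴ * V = 1)
    (hIA : Uᴴ * Fhatᴴ * V = 0)
    (G : Matrix (Fin N) (Fin d) ℂ) (hG : G = C⁻¹ * Fᴴ * Fhat * U)
    (QI : Matrix (Fin d) (Fin d) ℂ) (hQI : QI = Gᴴ * H * V * Vᴴ * Hᴴ * G)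
    (hq : chordalDistSq Fhat F ≤ Δ ^ 2)
    (QS : Matrix (Fin d) (Fin d) ℂ) (hQS : QS.PosSemidef) :
    Real.log ‖(1 + ((P / d : ℝ) : ℂ) • QS).det‖
        - (Real.log ‖(1 + ((P / d : ℝ) : ℂ) • (QS + QI)).det‖
            - Real.log ‖(1 + ((P / d : ℝ) : ℂ) • QI).det‖)
      ≤ d * Real.log (1 + 8 / (c ^ (2 / (N_G : ℝ)) * d)) :=
  rate_loss_bounded_constant_with_scaled_feedback_general N L d m N_G hNG c hc P hP N_f hNf Δ hΔ H F
    C hFC hC Fhat hFhat U hU V hV hIA G hG QI hQI hq QS hQS
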